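/- arXiv:2105.10455 — 10 statements merged into one kernel-verified Lean document; each statement's English description precedes it below -/
import Mathlib

section
/- Let A and B be n×n complex matrices and suppose C and D are n×n complex matrices satisfying ACA = A, BDB = B, CAC = C, DBD = D, DB = AC, and BD = CA. Then the column space of AB equals the column space of A. -/
theorem Matrix.range_mulVecLin_mul_eq_of_mul_mul_eq {R : Type*} [CommSemiring R]
    {m n p : Type*} [Fintype n] [Fintype p]
    {A : Matrix m n R} {B : Matrix n p R} (D : Matrix p n R) (h : A * B * D = A) :
    LinearMap.range (A * B).mulVecLin = LinearMap.range A.mulVecLin := by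
  apply le_antisymm
  · rw [Matrix.mulVecLin_mul]
    exact LinearMap.range_comp_le_range _ _
  · conv_lhs => rw [← h]
    rw [Matrix.mulVecLin_mul]
    exact LinearMap.range_comp_le_range _ _

theorem range_mul_eq_range_left_of_pairPseudoinverse_general {n : ℕ}
    (A B C D : Matrix (Fin n) (Fin n) ℂ)
    (h1 : A * C * A = A)
    (h6 : B * D = C * A) :
    LinearMap.range (A * B).mulVecLin = LinearMap.range A.mulVecLin :=
  Matrix.range_mulVecLin_mul_eq_of_mul_mul_eq D (by rw [mul_assoc, h6, ← mul_assoc, h1])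

theorem range_mul_eq_range_left_of_pairPseudoinverse {n : ℕ}
    (A B C D : Matrix (Fin n) (Fin n) ℂ)
    (h1 : A * C * A = A) (h2 : B * D * B = B)
    (h3 : C * A * C = C) (h4 : D * B * D = D)
    (h5 : D * B = A * C) (h6 : B * D = C * A) :
    LinearMap.range (A * B).mulVecLin = LinearMap.range A.mulVecLin :=
  range_mul_eq_range_left_of_pairPseudoinverse_general A B C D h1 h6
end

section
/- Let A and B be n×n complex matrices and suppose C and D are n×n complex matrices satisfying ACA = A, BDB = B, CAC = C, DBD = D, DB = AC, and BD = CA. Then the column space of BA equals the column space of B. -/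
namespace Matrix

variable {R l m n : Type*} [CommSemiring R] [Fintype m] [Fintype n]

theorem range_mulVecLin_mul_le (M : Matrix l m R) (N : Matrix m n R) :
    LinearMap.range (M * N).mulVecLin ≤ LinearMap.range M.mulVecLin := by
  rw [mulVecLin_mul]
  exact LinearMap.range_comp_le_range _ _

theorem range_mulVecLin_mul_eq_of_mul_mul_eq_s2 (M : Matrix l m R) (N : Matrix m n R)
    (P : Matrix n m R) (h : M * N * P = M) :
    LinearMap.range (M * N).mulVecLin = LinearMap.range M.mulVecLin :=
  le_antisymm (range_mulVecLin_mul_le M N) <| by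
    simpa only [h] using range_mulVecLin_mul_le (M * N) P

end Matrix

theorem range_mul_eq_range_right_of_pairPseudoinverse_general {n : ℕ}
    (A B C D : Matrix (Fin n) (Fin n) ℂ)
    (h2 : B * D * B = B)
    (h5 : D * B = A * C) :
    LinearMap.range (B * A).mulVecLin = LinearMap.range B.mulVecLin := by
  refine Matrix.range_mulVecLin_mul_eq_of_mul_mul_eq_s2 B A C ?_
  rw [Matrix.mul_assoc, ← h5, ← Matrix.mul_assoc, h2]

theorem range_mul_eq_range_right_of_pairPseudoinverse {n : ℕ}
    (A B C D : Matrix (Fin n) (Fin n) ℂ)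
    (h1 : A * C * A = A) (h2 : B * D * B = B)
    (h3 : C * A * C = C) (h4 : D * B * D = D)
    (h5 : D * B = A * C) (h6 : B * D = C * A) :
    LinearMap.range (B * A).mulVecLin = LinearMap.range B.mulVecLin :=
  range_mul_eq_range_right_of_pairPseudoinverse_general A B C D h2 h5
end

section
/- Let A and B be n×n complex matrices and suppose C and D are n×n complex matrices satisfying ACA = A, BDB = B, CAC = C, DBD = D, DB = AC, and BD = CA. Then range(B) ∩ ker(A) = {0}, and consequently ℂⁿ = range(B) ⊕ ker(A) (as the dimensions add up by rank-nullity and rank(A) = rank(B)). -/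
/-!
If `x = B y` lies in `ker A`, then `x = BDB y = BD x = CA x = 0`, so `range B` and `ker A` are
disjoint. From `A = ACA = DBA` and `B = BDB = CAB` each of `A`, `B` has rank at most that of the
other, so `rank B + dim ker A = rank A + dim ker A = n` and the two disjoint subspaces are
complementary.
-/

namespace Matrix

variable {R K : Type*} {l m n o : Type*}

theorem disjoint_range_ker_of_mul_eq_mul [Fintype l] [Fintype m] [Fintype n] [CommSemiring R]
    {A : Matrix l m R} {B : Matrix m n R} {C : Matrix m l R} {D : Matrix n m R}
    (hB : B * D * B = B) (hBD : B * D = C * A) :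
    Disjoint (LinearMap.range B.mulVecLin) (LinearMap.ker A.mulVecLin) := by
  rw [disjoint_iff_inf_le]
  rintro _ ⟨⟨y, rfl⟩, hAx⟩
  change A *ᵥ (B *ᵥ y) = 0 at hAx
  change B *ᵥ y = 0
  calc B *ᵥ y = (B * D * B) *ᵥ y := by rw [hB]
    _ = C *ᵥ (A *ᵥ (B *ᵥ y)) := by rw [hBD, ← mulVec_mulVec, ← mulVec_mulVec]
    _ = 0 := by rw [hAx, mulVec_zero]

theorem rank_le_of_eq_mul_mul [Fintype m] [Fintype n] [Fintype o] [CommSemiring R]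
    [StrongRankCondition R] {A : Matrix l o R} {B : Matrix m n R} {X : Matrix l m R}
    {Y : Matrix n o R} (h : A = X * B * Y) : A.rank ≤ B.rank :=
  h ▸ (rank_mul_le_left _ _).trans (rank_mul_le_right _ _)

theorem rank_eq_of_mul_eq_mul [Fintype m] [Fintype n] [CommSemiring R] [StrongRankCondition R]
    {A : Matrix n m R} {B : Matrix m n R} {C : Matrix m n R} {D : Matrix n m R}
    (hA : A * C * A = A) (hB : B * D * B = B) (hDB : D * B = A * C) (hBD : B * D = C * A) :
    A.rank = B.rank := by
  refine le_antisymm (rank_le_of_eq_mul_mul (X := D) (Y := A) ?_)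
    (rank_le_of_eq_mul_mul (X := C) (Y := B) ?_)
  · rw [hDB, hA]
  · rw [← hBD, hB]

theorem isCompl_range_ker_of_rank_eq [Fintype m] [Fintype n] [Field K]
    {A : Matrix l m K} {B : Matrix m n K} (hrank : A.rank = B.rank)
    (hdisj : Disjoint (LinearMap.range B.mulVecLin) (LinearMap.ker A.mulVecLin)) :
    IsCompl (LinearMap.range B.mulVecLin) (LinearMap.ker A.mulVecLin) := by
  refine (Submodule.isCompl_iff_disjoint _ _ ?_).mpr hdisj
  rw [← LinearMap.finrank_range_add_finrank_ker A.mulVecLin]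
  exact (congrArg (· + _) hrank).le

end Matrix

theorem range_inf_ker_eq_bot_of_pairPseudoinverse_general {n : ℕ}
    (A B C D : Matrix (Fin n) (Fin n) ℂ)
    (h1 : A * C * A = A) (h2 : B * D * B = B)
    (h5 : D * B = A * C) (h6 : B * D = C * A) :
    LinearMap.range B.mulVecLin ⊓ LinearMap.ker A.mulVecLin = ⊥ ∧
      IsCompl (LinearMap.range B.mulVecLin) (LinearMap.ker A.mulVecLin) := by
  have hdisj := Matrix.disjoint_range_ker_of_mul_eq_mul h2 h6
  exact ⟨hdisj.eq_bot,
    Matrix.isCompl_range_ker_of_rank_eq (Matrix.rank_eq_of_mul_eq_mul h1 h2 h5 h6) hdisj⟩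

theorem range_inf_ker_eq_bot_of_pairPseudoinverse {n : ℕ}
    (A B C D : Matrix (Fin n) (Fin n) ℂ)
    (h1 : A * C * A = A) (h2 : B * D * B = B)
    (h3 : C * A * C = C) (h4 : D * B * D = D)
    (h5 : D * B = A * C) (h6 : B * D = C * A) :
    LinearMap.range B.mulVecLin ⊓ LinearMap.ker A.mulVecLin = ⊥ ∧
      IsCompl (LinearMap.range B.mulVecLin) (LinearMap.ker A.mulVecLin) :=
  range_inf_ker_eq_bot_of_pairPseudoinverse_general A B C D h1 h2 h5 h6
end

section
/- Let A and B be n×n complex matrices with rank(AB) = rank(A) = rank(B) = rank(BA). Then there exist n×n complex matrices C and D satisfying ACA = A, BDB = B, CAC = C, DBD = D, DB = AC, and BD = CA. -/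
/-!
By rank counting (a range inside a range of equal dimension equals it), `A` and `B` factor
through `X = A * B` and `B * A` on both sides: `A = X U`, `B = V X`, `B = B A W`, `A = V' B A`.
These give `X = X² U W` and `X = V' V X²`, so `X` has a group inverse `Y` (an inner and outer
inverse commuting with `X`), and `C = B Y`, `D = Y A` satisfy the six equations by pure monoid
algebra.
-/

open Matrix LinearMap

section GroupInverse

variable {M : Type*} [Monoid M]

def IsGroupInverse (x y : M) : Prop :=
  Commute x y ∧ x * y * x = x ∧ y * x * y = y

theorem exists_isGroupInverse_of_eq_mul_mul {x s t : M} (hs : x = x * x * s)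
    (ht : x = t * x * x) :
    ∃ y, IsGroupInverse x y := by
  have htx : t * x = x * s := by
    calc t * x = t * (x * x * s) := by rw [← hs]
      _ = t * x * x * s := by simp only [mul_assoc]
      _ = x * s := by rw [← ht]
  have hyx : t * t * x * x = t * x := by
    calc t * t * x * x = t * (t * x * x) := by simp only [mul_assoc]
      _ = t * x := by rw [← ht]
  have hxy : x * (t * t * x) = t * x := by
    calc x * (t * t * x) = x * t * (t * x) := by simp only [mul_assoc]
      _ = x * t * (x * s) := by rw [htx]
      _ = x * (t * x) * s := by simp only [mul_assoc]
      _ = x * (x * s) * s := by rw [htx]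
      _ = x * x * s * s := by simp only [mul_assoc]
      _ = t * x := by rw [← hs, htx]
  refine ⟨t * t * x, hxy.trans hyx.symm, ?_, ?_⟩
  · rw [hxy, ← ht]
  · rw [hyx, mul_assoc, hxy, ← mul_assoc]

theorem IsGroupInverse.exists_pairPseudoinverse {a b u v y : M} (hy : IsGroupInverse (a * b) y)
    (hu : a = a * b * u) (hv : b = v * (a * b)) :
    ∃ c d : M, a * c * a = a ∧ b * d * b = b ∧ c * a * c = c ∧ d * b * d = d ∧
      d * b = a * c ∧ b * d = c * a := by
  obtain ⟨hcomm, hxyx, hyxy⟩ := hy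
  refine ⟨b * y, y * a, ?_, ?_, ?_, ?_, ?_, ?_⟩
  · calc a * (b * y) * a = a * b * y * (a * b * u) := by rw [← hu]; simp only [mul_assoc]
      _ = a := by rw [← mul_assoc, hxyx, ← hu]
  · calc b * (y * a) * b = v * (a * b) * y * (a * b) := by rw [← hv]; simp only [mul_assoc]
      _ = v * (a * b * y * (a * b)) := by simp only [mul_assoc]
      _ = b := by rw [hxyx, ← hv]
  · calc b * y * a * (b * y) = b * (y * (a * b) * y) := by simp only [mul_assoc]
      _ = b * y := by rw [hyxy]
  · calc y * a * b * (y * a) = (y * (a * b) * y) * a := by simp only [mul_assoc]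
      _ = y * a := by rw [hyxy]
  · calc y * a * b = y * (a * b) := mul_assoc _ _ _
      _ = a * (b * y) := by rw [← hcomm.eq, mul_assoc]
  · simp only [mul_assoc]

theorem exists_pairPseudoinverse_of_eq_mul_mul {a b u w v v' : M} (hu : a = a * b * u)
    (hw : b = b * a * w) (hv : b = v * (a * b)) (hv' : a = v' * (b * a)) :
    ∃ c d : M, a * c * a = a ∧ b * d * b = b ∧ c * a * c = c ∧ d * b * d = d ∧
      d * b = a * c ∧ b * d = c * a := by
  have hs : a * b = a * b * (a * b) * (u * w) := by
    calc a * b = a * (b * a * w) := by rw [← hw]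
      _ = a * b * (a * b * u) * w := by rw [← hu]; simp only [mul_assoc]
      _ = _ := by simp only [mul_assoc]
  have ht : a * b = v' * v * (a * b) * (a * b) := by
    calc a * b = v' * (b * a) * b := by rw [← hv']
      _ = v' * (v * (a * b)) * (a * b) := by rw [← hv]; simp only [mul_assoc]
      _ = v' * v * (a * b) * (a * b) := by simp only [mul_assoc]
  obtain ⟨y, hy⟩ := exists_isGroupInverse_of_eq_mul_mul hs ht
  exact hy.exists_pairPseudoinverse hu hv

end GroupInverse

namespace Matrix

variable {K l m n : Type*} [Field K] [Fintype m] [Fintype n]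

theorem range_mulVecLin_mul_eq_of_rank_mul_eq_left {A : Matrix l m K} {B : Matrix m n K}
    (h : (A * B).rank = A.rank) : range (A * B).mulVecLin = range A.mulVecLin := by
  unfold rank at h
  rw [mulVecLin_mul] at h ⊢
  exact Submodule.eq_of_le_of_finrank_eq (range_comp_le_range _ _) h

theorem exists_mul_mul_eq_of_rank_mul_eq_left [DecidableEq m] {A : Matrix l m K} {B : Matrix m n K}
    (h : (A * B).rank = A.rank) : ∃ U : Matrix n m K, A * B * U = A := by
  have hcol : ∀ j, A *ᵥ Pi.single j 1 ∈ range (A * B).mulVecLin := fun j => by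
    rw [range_mulVecLin_mul_eq_of_rank_mul_eq_left h]; exact mem_range_self _ _
  choose u hu using hcol
  refine ⟨of fun i j => u j i, ext_of_mulVec_single fun j => ?_⟩
  rw [← mulVec_mulVec, mulVec_single_one]
  exact hu j

theorem exists_mul_mul_eq_of_rank_mul_eq_right [Fintype l] {A : Matrix l m K} {B : Matrix m n K}
    (h : (A * B).rank = B.rank) : ∃ V : Matrix m l K, V * (A * B) = B := by
  classical
  obtain ⟨U, hU⟩ := exists_mul_mul_eq_of_rank_mul_eq_left (A := Bᵀ) (B := Aᵀ)
    (by rw [← transpose_mul, rank_transpose, rank_transpose, h])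
  refine ⟨Uᵀ, ?_⟩
  simpa only [transpose_mul, transpose_transpose, Matrix.mul_assoc] using congrArg transpose hU

end Matrix

theorem exists_pairPseudoinverse_of_rank {n : ℕ}
    (A B : Matrix (Fin n) (Fin n) ℂ)
    (hAB : (A * B).rank = A.rank) (hA : A.rank = B.rank)
    (hBA : B.rank = (B * A).rank) :
    ∃ C D : Matrix (Fin n) (Fin n) ℂ,
      A * C * A = A ∧ B * D * B = B ∧ C * A * C = C ∧ D * B * D = D ∧
        D * B = A * C ∧ B * D = C * A := by
  obtain ⟨U, hU⟩ := exists_mul_mul_eq_of_rank_mul_eq_left hAB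
  obtain ⟨W, hW⟩ := exists_mul_mul_eq_of_rank_mul_eq_left hBA.symm
  obtain ⟨V, hV⟩ := exists_mul_mul_eq_of_rank_mul_eq_right (hAB.trans hA)
  obtain ⟨V', hV'⟩ := exists_mul_mul_eq_of_rank_mul_eq_right (hBA.symm.trans hA.symm)
  exact exists_pairPseudoinverse_of_eq_mul_mul hU.symm hW.symm hV.symm hV'.symm
end

section
/- Let A and B be n×n complex matrices. The pair [A,B] has a pseudoinverse (i.e., there exist C, D with ACA = A, BDB = B, CAC = C, DBD = D, DB = AC, BD = CA) if and only if rank(AB) = rank(A) = rank(B) = rank(BA). -/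
/-!
If `[C, D]` is a pseudoinverse of `[A, B]`, then `C * (A * B) = B` and `D * (B * A) = A`, so
`rank B ≤ rank (A * B) ≤ rank A ≤ rank (B * A) ≤ rank B`.

Conversely, the rank equalities say that `A * B` has the column space of `A` and `B * A` its row
space, so `A = A * B * X = Y * (B * A)`. With a generalized inverse `G` of `A`, `Z = X * G * Y`
satisfies `(A * B) * Z * (B * A) = A`, and symmetrically some `W` satisfies
`(B * A) * W * (A * B) = B`. Then `[B * Z * B, A * W * A]` is a pseudoinverse of `[A, B]`, which
only takes associativity to check.
-/

open LinearMap

namespace Matrix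

theorem exists_mul_eq_of_range_le {R m n p : Type*} [CommSemiring R] [Fintype n] [Fintype p]
    {M : Matrix m n R} {X : Matrix m p R} (h : range X.mulVecLin ≤ range M.mulVecLin) :
    ∃ Y : Matrix n p R, M * Y = X := by
  rw [range_mulVecLin] at h
  choose y hy using fun j => h (Submodule.subset_span ⟨j, rfl⟩)
  refine ⟨(of y)ᵀ, ext fun i j => ?_⟩
  simpa [mul_apply, mulVec, dotProduct] using congrFun (hy j) i

theorem exists_mul_mul_eq_self {K m n : Type*} [Field K] [Fintype m] [Fintype n]
    (M : Matrix m n K) : ∃ G : Matrix n m K, M * G * M = M := by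
  classical
  let f := M.mulVecLin
  obtain ⟨s, hs⟩ := f.rangeRestrict.exists_rightInverse_of_surjective f.range_rangeRestrict
  obtain ⟨r, hr⟩ := (range f).subtype.exists_leftInverse_of_injective (Submodule.ker_subtype _)
  refine ⟨toMatrix' (s ∘ₗ r), toLin'.injective (LinearMap.ext fun v => ?_)⟩
  have hfs : ∀ w, f (s w) = w := fun w => congrArg Subtype.val (LinearMap.congr_fun hs w)
  have hrf : ∀ v, r (f v) = f.rangeRestrict v := fun v =>
    LinearMap.congr_fun hr (f.rangeRestrict v)
  simp only [toLin'_mul, toLin'_toMatrix']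
  exact (hfs _).trans (congrArg Subtype.val (hrf v))

theorem exists_mul_mul_eq_of_rank_mul_eq {K m n p : Type*} [Field K] [Fintype n] [Fintype p]
    {M : Matrix m n K} {N : Matrix n p K} (h : (M * N).rank = M.rank) :
    ∃ X : Matrix p n K, M * N * X = M := by
  have hle : range (M * N).mulVecLin ≤ range M.mulVecLin := by
    rw [mulVecLin_mul]
    exact range_comp_le_range _ _
  exact exists_mul_eq_of_range_le (Submodule.eq_of_le_of_finrank_eq hle h).ge

theorem exists_mul_mul_eq_of_rank_mul_eq' {K m n p : Type*} [Field K] [Fintype m] [Fintype n]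
    [Fintype p] {M : Matrix m n K} {N : Matrix p m K} (h : (N * M).rank = M.rank) :
    ∃ Y : Matrix m p K, Y * (N * M) = M := by
  rw [← rank_transpose, ← rank_transpose M, transpose_mul] at h
  obtain ⟨X, hX⟩ := exists_mul_mul_eq_of_rank_mul_eq h
  refine ⟨Xᵀ, ?_⟩
  simpa only [transpose_mul, transpose_transpose, Matrix.mul_assoc]
    using congrArg transpose hX

theorem exists_mul_mul_mul_eq_of_rank_mul_eq {K l m n p : Type*} [Field K] [Fintype l]
    [Fintype m] [Fintype n] [Fintype p] {M : Matrix m n K} {P : Matrix l m K}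
    {Q : Matrix n p K} (hQ : (M * Q).rank = M.rank) (hP : (P * M).rank = M.rank) :
    ∃ Z : Matrix p l K, M * Q * Z * (P * M) = M := by
  obtain ⟨X, hX⟩ := exists_mul_mul_eq_of_rank_mul_eq hQ
  obtain ⟨Y, hY⟩ := exists_mul_mul_eq_of_rank_mul_eq' hP
  obtain ⟨G, hG⟩ := M.exists_mul_mul_eq_self
  refine ⟨X * G * Y, ?_⟩
  calc M * Q * (X * G * Y) * (P * M) = M * Q * X * G * (Y * (P * M)) := by
        simp only [Matrix.mul_assoc]
    _ = M := by rw [hX, hY, hG]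

end Matrix

def IsPairPseudoinverse {S : Type*} [Mul S] (a b c d : S) : Prop :=
  a * c * a = a ∧ b * d * b = b ∧ c * a * c = c ∧ d * b * d = d ∧ d * b = a * c ∧ b * d = c * a

theorem IsPairPseudoinverse.rank_eq {R n : Type*} [CommRing R] [StrongRankCondition R]
    [Fintype n] {A B C D : Matrix n n R} (h : IsPairPseudoinverse A B C D) :
    (A * B).rank = A.rank ∧ A.rank = B.rank ∧ B.rank = (B * A).rank := by
  obtain ⟨hA, hB, -, -, hDB, hBD⟩ := h
  have hCAB : C * (A * B) = B := by rw [← Matrix.mul_assoc, ← hBD, hB]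
  have hDBA : D * (B * A) = A := by rw [← Matrix.mul_assoc, hDB, hA]
  have h₁ := hCAB ▸ Matrix.rank_mul_le_right C (A * B)
  have h₂ := hDBA ▸ Matrix.rank_mul_le_right D (B * A)
  have h₃ := Matrix.rank_mul_le_left A B
  have h₄ := Matrix.rank_mul_le_left B A
  omega

theorem isPairPseudoinverse_of_mul_mul_eq {S : Type*} [Semigroup S] {a b z w : S}
    (hz : a * b * z * (b * a) = a) (hw : b * a * w * (a * b) = b) :
    IsPairPseudoinverse a b (b * z * b) (a * w * a) := by
  have hzb : b * z * b * (a * b) = b :=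
    calc b * z * b * (a * b) = b * a * w * (a * b) * z * b * (a * b) := by rw [hw]
      _ = b * a * w * (a * b * z * (b * a)) * b := by simp only [mul_assoc]
      _ = b := by rw [hz, mul_assoc _ a b, hw]
  have hwa : a * w * a * (b * a) = a :=
    calc a * w * a * (b * a) = a * b * z * (b * a) * w * a * (b * a) := by rw [hz]
      _ = a * b * z * (b * a * w * (a * b)) * a := by simp only [mul_assoc]
      _ = a := by rw [hw, mul_assoc _ b a, hz]
  refine ⟨by simpa only [mul_assoc] using hz, by simpa only [mul_assoc] using hw, ?_, ?_, ?_, ?_⟩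
  · calc b * z * b * a * (b * z * b) = b * z * b * (a * b) * z * b := by simp only [mul_assoc]
      _ = b * z * b := by rw [hzb]
  · calc a * w * a * b * (a * w * a) = a * w * a * (b * a) * w * a := by simp only [mul_assoc]
      _ = a * w * a := by rw [hwa]
  · calc a * w * a * b = a * b * z * (b * a) * w * a * b := by rw [hz]
      _ = a * b * z * (b * a * w * (a * b)) := by simp only [mul_assoc]
      _ = a * (b * z * b) := by rw [hw]; simp only [mul_assoc]
  · calc b * (a * w * a) = b * a * w * (a * b * z * (b * a)) := by rw [hz]; simp only [mul_assoc]
      _ = b * a * w * (a * b) * z * (b * a) := by simp only [mul_assoc]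
      _ = b * z * b * a := by rw [hw]; simp only [mul_assoc]

theorem pairPseudoinverse_iff_rank {n : ℕ}
    (A B : Matrix (Fin n) (Fin n) ℂ) :
    (∃ C D : Matrix (Fin n) (Fin n) ℂ,
      A * C * A = A ∧ B * D * B = B ∧ C * A * C = C ∧ D * B * D = D ∧
        D * B = A * C ∧ B * D = C * A) ↔
      ((A * B).rank = A.rank ∧ A.rank = B.rank ∧ B.rank = (B * A).rank) := by
  refine ⟨fun ⟨_, _, h⟩ => IsPairPseudoinverse.rank_eq h, fun ⟨h₁, h₂, h₃⟩ => ?_⟩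
  obtain ⟨Z, hZ⟩ :=
    Matrix.exists_mul_mul_mul_eq_of_rank_mul_eq (M := A) (Q := B) (P := B) (by omega) (by omega)
  obtain ⟨W, hW⟩ :=
    Matrix.exists_mul_mul_mul_eq_of_rank_mul_eq (M := B) (Q := A) (P := A) (by omega) (by omega)
  exact ⟨_, _, isPairPseudoinverse_of_mul_mul_eq hZ hW⟩
end

section
/- Let A and B be n×n complex matrices such that the pair [A,B] has a pseudoinverse (equivalently, rank(AB) = rank(A) = rank(B) = rank(BA)). Then there exists an n×n complex matrix S with S² = AB; moreover S can be chosen so that S has no nonzero nilpotent part, i.e., ker(S) = ker(S²). -/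
/-!
The rank conditions give `ker B = ker (A B)` and `ker A = ker (B A)`, hence
`ker (A B)² = ker (A B)`.
For such an endomorphism `M`, `0` is at most a simple root of its minimal polynomial `μ`, so `X` has
a square root `q` modulo `μ`: modulo `(X - a) ^ m` with `a ≠ 0` by Newton–Hensel lifting, modulo `X`
trivially, and modulo `μ` by the Chinese remainder theorem. Then `S = q(M)` satisfies `S² = M`, and
on `ker M` it acts as the scalar `q(0)`, whose square is `0`; hence `ker S = ker M`.
-/

open Polynomial LinearMap

section SquareRootsModulo

variable {R : Type*} [CommRing R]

theorem sq_sub_dvd_of_dvd_sub {p q q' x : R} (hq : p ∣ q - q') (hq' : p ∣ q' ^ 2 - x) :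
    p ∣ q ^ 2 - x := by
  simpa using (hq.trans (sub_dvd_pow_sub_pow q q' 2)).add hq'

theorem IsCoprime.exists_sq_sub_dvd_mul {p₁ p₂ q₁ q₂ x : R} (hco : IsCoprime p₁ p₂)
    (h₁ : p₁ ∣ q₁ ^ 2 - x) (h₂ : p₂ ∣ q₂ ^ 2 - x) : ∃ q, p₁ * p₂ ∣ q ^ 2 - x := by
  obtain ⟨u, v, huv⟩ := id hco
  refine ⟨q₂ * u * p₁ + q₁ * v * p₂,
    hco.mul_dvd (sq_sub_dvd_of_dvd_sub ?_ h₁) (sq_sub_dvd_of_dvd_sub ?_ h₂)⟩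
  · exact ⟨u * (q₂ - q₁), by linear_combination q₁ * huv⟩
  · exact ⟨v * (q₁ - q₂), by linear_combination q₂ * huv⟩

theorem exists_sq_sub_dvd_prod {ι : Type*} {s : Finset ι} {f : ι → R} {x : R}
    (hco : (s : Set ι).Pairwise fun i j => IsCoprime (f i) (f j))
    (h : ∀ i ∈ s, ∃ q, f i ∣ q ^ 2 - x) :
    ∃ q, ∏ i ∈ s, f i ∣ q ^ 2 - x := by
  classical
  induction s using Finset.induction_on with
  | empty => exact ⟨0, by simp⟩
  | insert i s hi ih =>
    rw [Finset.coe_insert, Set.pairwise_insert] at hco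
    obtain ⟨q₁, hq₁⟩ := h i (Finset.mem_insert_self i s)
    obtain ⟨q₂, hq₂⟩ := ih hco.1 fun j hj => h j (Finset.mem_insert_of_mem hj)
    have hco' : IsCoprime (f i) (∏ j ∈ s, f j) :=
      IsCoprime.prod_right fun j hj => (hco.2 j hj (ne_of_mem_of_not_mem hj hi).symm).1
    rw [Finset.prod_insert hi]
    exact hco'.exists_sq_sub_dvd_mul hq₁ hq₂

variable {K : Type*} [Field K]

theorem exists_sq_sub_X_dvd_X_sub_C_pow [NeZero (2 : K)] {a : K} (ha : IsSquare a) (ha0 : a ≠ 0)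
    (m : ℕ) : ∃ q : K[X], (X - C a) ^ m ∣ q ^ 2 - X := by
  suffices ∀ k : ℕ, ∃ q : K[X], (X - C a) ^ (k + 1) ∣ q ^ 2 - X from
    (this m).imp fun q => (pow_dvd_pow _ m.le_succ).trans
  intro k
  induction k with
  | zero =>
    obtain ⟨c, rfl⟩ := ha
    exact ⟨C c, by rw [pow_one, dvd_sub_comm, sq, ← C_mul]⟩
  | succ k ih =>
    obtain ⟨q, r, hr⟩ := ih
    have hqa : q.eval a ^ 2 = a := by
      simpa [sub_eq_zero] using dvd_iff_isRoot.mp ((dvd_pow_self _ k.succ_ne_zero).trans ⟨r, hr⟩)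
    have hq0 : q.eval a ≠ 0 := by
      rintro h
      simp [h, eq_comm, ha0] at hqa
    -- Newton step: `d` is chosen so that `X - a` divides `r + 2 d q`.
    set d := -r.eval a / (2 * q.eval a)
    refine ⟨q + C d * (X - C a) ^ (k + 1), ?_⟩
    have hexp : (q + C d * (X - C a) ^ (k + 1)) ^ 2 - X
        = (X - C a) ^ (k + 1) * (r + 2 * C d * q + C d ^ 2 * (X - C a) ^ (k + 1)) := by
      linear_combination hr
    rw [hexp, pow_succ]
    refine mul_dvd_mul_left _ (dvd_iff_isRoot.mpr ?_)
    simp only [IsRoot, eval_add, eval_mul, eval_pow, eval_C, eval_ofNat, eval_sub, eval_X,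
      sub_self, zero_pow k.succ_ne_zero, mul_zero, add_zero, d]
    field_simp
    ring

theorem exists_sq_sub_X_dvd [IsAlgClosed K] [NeZero (2 : K)] {p : K[X]} (hp : ¬X ^ 2 ∣ p) :
    ∃ q : K[X], p ∣ q ^ 2 - X := by
  classical
  have hp0 : p ≠ 0 := by
    rintro rfl
    exact hp (dvd_zero _)
  have hdvd : p ∣ ∏ a ∈ p.roots.toFinset, (X - C a) ^ rootMultiplicity a p := by
    rw [← prod_multiset_root_eq_finset_root]
    conv_lhs =>
      rw [← C_leadingCoeff_mul_prod_multiset_X_sub_C (p := p) IsAlgClosed.card_roots_eq_natDegree]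
    exact (C_mul_dvd (leadingCoeff_ne_zero.mpr hp0)).mpr dvd_rfl
  have hfactor (a : K) : ∃ q : K[X], (X - C a) ^ rootMultiplicity a p ∣ q ^ 2 - X := by
    by_cases ha : a = 0
    · have hmult : rootMultiplicity a p ≤ 1 := by
        by_contra! h
        exact hp (by simpa [ha] using (le_rootMultiplicity_iff hp0).mp h)
      exact ⟨0, (pow_dvd_pow _ hmult).trans (by simp [ha])⟩
    · exact exists_sq_sub_X_dvd_X_sub_C_pow (IsAlgClosed.exists_eq_mul_self a) ha _
  obtain ⟨q, hq⟩ := exists_sq_sub_dvd_prod (s := p.roots.toFinset)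
    (fun a _ b _ hab => (pairwise_coprime_X_sub_C Function.injective_id hab).pow)
    fun a _ => hfactor a
  exact ⟨q, hdvd.trans hq⟩

end SquareRootsModulo

namespace LinearMap

variable {K U V W : Type*} [Field K] [AddCommGroup U] [Module K U] [AddCommGroup V] [Module K V]
  [AddCommGroup W] [Module K W]

theorem ker_comp_eq_of_finrank_range_eq [FiniteDimensional K U] (f : V →ₗ[K] W) (g : U →ₗ[K] V)
    (h : Module.finrank K (range (f ∘ₗ g)) = Module.finrank K (range g)) :
    ker (f ∘ₗ g) = ker g := by
  refine (Submodule.eq_of_le_of_finrank_le (ker_le_ker_comp g f) ?_).symm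
  have := finrank_range_add_finrank_ker (f ∘ₗ g)
  have := finrank_range_add_finrank_ker g
  omega

theorem ker_comp_comp_le_of_ker_comp_le (f : V →ₗ[K] W) (g : W →ₗ[K] V)
    (hg : ker (f ∘ₗ g) ≤ ker g) (hf : ker (g ∘ₗ f) ≤ ker f) :
    ker ((f ∘ₗ g) ∘ₗ (f ∘ₗ g)) ≤ ker (f ∘ₗ g) :=
  fun _ hx => hf (hg hx)

end LinearMap

namespace Module.End

variable {K V : Type*} [Field K] [AddCommGroup V] [Module K V] [FiniteDimensional K V]

theorem not_X_sq_dvd_minpoly {f : Module.End K V} (hf : ker (f * f) ≤ ker f) :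
    ¬X ^ 2 ∣ minpoly K f := by
  rintro ⟨g, hg⟩
  have hXg : aeval f (X * g) = 0 := by
    ext v
    have hv : (f * f) (aeval f g v) = 0 := by
      have : f * f * aeval f g = aeval f (minpoly K f) := by
        rw [hg, map_mul, map_pow, aeval_X, pow_two]
      rw [← mul_apply, this, minpoly.aeval, LinearMap.zero_apply]
    simpa [mul_apply] using hf hv
  have hXg0 : X * g ≠ 0 := by
    rintro h
    apply minpoly.ne_zero (Algebra.IsIntegral.isIntegral (R := K) f)
    rw [hg, pow_two, mul_assoc, h, mul_zero]
  have hdvd : X * (X * g) ∣ 1 * (X * g) := by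
    rw [one_mul, ← mul_assoc, ← pow_two, ← hg]
    exact minpoly.dvd K f hXg
  exact not_isUnit_X (isUnit_of_dvd_one ((mul_dvd_mul_iff_right hXg0).mp hdvd))

theorem exists_mul_self_eq_and_ker_eq [IsAlgClosed K] [NeZero (2 : K)] {f : Module.End K V}
    (hf : ker (f * f) ≤ ker f) : ∃ s : Module.End K V, s * s = f ∧ ker s = ker (s * s) := by
  obtain ⟨q, hq⟩ := exists_sq_sub_X_dvd (not_X_sq_dvd_minpoly hf)
  have hsq : aeval f q * aeval f q = f := by
    rw [← sub_eq_zero, ← pow_two, ← map_pow]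
    simpa using minpoly.dvd_iff.mp hq
  refine ⟨aeval f q, hsq, le_antisymm (ker_le_ker_comp _ _) fun x hx => ?_⟩
  rw [hsq] at hx
  have hqx : aeval f q x = q.eval 0 • x := aeval_apply_of_mem_apply_eq_smul (by simpa using hx)
  have hq0 : (q.eval 0 * q.eval 0) • x = 0 := by
    rw [mul_smul, ← hqx, ← map_smul, ← hqx, ← mul_apply, hsq]
    exact hx
  rw [mem_ker, hqx]
  exact smul_eq_zero.mpr ((smul_eq_zero.mp hq0).imp_left mul_self_eq_zero.mp)

end Module.End

theorem exists_sqrt_of_pairPseudoinverse {n : ℕ}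
    (A B : Matrix (Fin n) (Fin n) ℂ)
    (hAB : (A * B).rank = A.rank) (hA : A.rank = B.rank)
    (hBA : B.rank = (B * A).rank) :
    ∃ S : Matrix (Fin n) (Fin n) ℂ, S * S = A * B ∧
      LinearMap.ker S.mulVecLin = LinearMap.ker (S * S).mulVecLin := by
  have hkerB : ker (A.mulVecLin ∘ₗ B.mulVecLin) ≤ ker B.mulVecLin :=
    (ker_comp_eq_of_finrank_range_eq _ _ (by
      rw [← Matrix.mulVecLin_mul]; exact hAB.trans hA)).le
  have hkerA : ker (B.mulVecLin ∘ₗ A.mulVecLin) ≤ ker A.mulVecLin :=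
    (ker_comp_eq_of_finrank_range_eq _ _ (by
      rw [← Matrix.mulVecLin_mul]; exact (hA.trans hBA).symm)).le
  obtain ⟨s, hs, hker⟩ := Module.End.exists_mul_self_eq_and_ker_eq (f := (A * B).mulVecLin)
    (by simpa [Module.End.mul_eq_comp, Matrix.mulVecLin_mul]
      using ker_comp_comp_le_of_ker_comp_le _ _ hkerB hkerA)
  refine ⟨LinearMap.toMatrix' s, ?_, ?_⟩
  · rw [← LinearMap.toMatrix'_mul, hs, ← Matrix.toLin'_apply', LinearMap.toMatrix'_toLin']
  · simpa [← Matrix.toLin'_apply', Matrix.toLin'_mul, Module.End.mul_eq_comp] using hker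
end

section
/- Let A and B be n×n complex matrices with rank(AB) = rank(A) = rank(B) = rank(BA). Then there exist invertible complex matrices P, Q and a complex matrix J (which may be taken upper triangular with ker(J) = ker(J²)) such that A = PJQ⁻¹ and B = QJP⁻¹. -/
/-!
Factor `A = A₁ A₂` and `B = B₁ B₂` through `Kʳ`, `r = rank A`. The rank conditions say exactly
that the `r × r` matrices `F = A₂ B₁` and `G = B₂ A₁` are invertible. An invertible matrix over an
algebraically closed field of characteristic `≠ 2` has a square root (a polynomial in it, obtained
by Hensel-lifting `√X` modulo the characteristic polynomial) and is similar to an upper triangular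
matrix; refactoring `B` through that similarity we may assume `G F = C²` with `C` upper triangular
and invertible. Then `A = (A₁ G⁻¹ C) C (F⁻¹ A₂)` and `B = B₁ C (C⁻¹ B₂)`, where `A₁ G⁻¹ C` and `B₁`
have the left inverses `C⁻¹ B₂` and `F⁻¹ A₂`. Completing these `n × r` matrices to invertible
`P`, `Q` gives `A = P J Q⁻¹`, `B = Q J P⁻¹` with `J = diag(C, 0)`, and `ker J = ker J²` because `C`
is invertible.
-/

open Module Polynomial

namespace Polynomial

variable {K : Type*} [Field K] [IsAlgClosed K] [NeZero (2 : K)]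

theorem exists_prod_X_sub_C_dvd_sq_sub_X {s : Multiset K} (hs : 0 ∉ s) :
    ∃ p : K[X], (s.map (X - C ·)).prod ∣ p ^ 2 - X := by
  induction s using Multiset.induction_on with
  | empty => exact ⟨0, by simp⟩
  | cons a s ih =>
    rw [Multiset.mem_cons, not_or] at hs
    obtain ⟨p, f, hf⟩ := ih hs.2
    set g := (s.map (X - C ·)).prod
    -- `(p + t g)² - X = g (f + 2 t p + t² g)`, so we need `t` killing the second factor at `a`;
    -- the quadratic is nondegenerate since `g a = 0` forces `(p a)² = a ≠ 0`.
    obtain ⟨t, ht⟩ : ∃ t : K, g.eval a * (t * t) + 2 * p.eval a * t + f.eval a = 0 := by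
      have heval : p.eval a ^ 2 - a = g.eval a * f.eval a := by simpa using congrArg (eval a) hf
      by_cases hg : g.eval a = 0
      · have hp : p.eval a ≠ 0 := fun hp => hs.1 (by simp_all)
        exact ⟨-f.eval a / (2 * p.eval a), by rw [hg]; field_simp; ring⟩
      · exact exists_quadratic_eq_zero hg (IsAlgClosed.exists_eq_mul_self _)
    obtain ⟨u, hu⟩ : X - C a ∣ f + 2 * C t * p + C t ^ 2 * g := by
      rw [dvd_iff_isRoot]
      simp only [IsRoot, eval_add, eval_mul, eval_pow, eval_C, eval_ofNat]
      linear_combination ht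
    refine ⟨p + C t * g, u, ?_⟩
    rw [Multiset.map_cons, Multiset.prod_cons]
    linear_combination hf + g * hu

end Polynomial

namespace Matrix

section Blocks

variable {R : Type*}

theorem isUpperTriangular_reindex_fromBlocks [Zero R] {r m n : ℕ} (h : r + m = n)
    {C : Matrix (Fin r) (Fin r) R} {D : Matrix (Fin m) (Fin m) R}
    (hC : C.IsUpperTriangular) (hD : D.IsUpperTriangular) (B : Matrix (Fin r) (Fin m) R) :
    (reindex (finSumFinEquiv.trans (finCongr h)) (finSumFinEquiv.trans (finCongr h))
      (fromBlocks C B 0 D)).IsUpperTriangular := by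
  rw [IsUpperTriangular, blockTriangular_reindex_iff]
  rintro (i | i) (j | j) hij <;>
    simp only [Function.comp_apply, id, Equiv.trans_apply, finSumFinEquiv_apply_left,
      finSumFinEquiv_apply_right, finCongr_apply, Fin.lt_def, Fin.val_cast, Fin.val_castAdd,
      Fin.val_natAdd] at hij
  · exact hC hij
  · omega
  · rfl
  · exact hD (show j < i by omega)

theorem submatrix_mul_submatrix_eq_one [Semiring R] {n ι : Type*} [Fintype n] [DecidableEq n]
    [Fintype ι] [DecidableEq ι] {X : Matrix n ι R} {Y : Matrix ι n R} (h : Y * X = 1)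
    (e : n ≃ ι) : Y.submatrix e id * X.submatrix id e = 1 := by
  rw [← submatrix_mul _ _ _ _ _ Function.bijective_id, h, submatrix_one_equiv]

theorem ker_mulVecLin_eq_ker_mul_self [CommSemiring R] {n : Type*} [Fintype n]
    {J X : Matrix n n R} (h : X * (J * J) = J) :
    LinearMap.ker J.mulVecLin = LinearMap.ker (J * J).mulVecLin := by
  rw [mulVecLin_mul]
  refine le_antisymm (LinearMap.ker_le_ker_comp _ _) fun v hv => ?_
  rw [LinearMap.mem_ker, ← h, mulVecLin_mul, LinearMap.comp_apply, mulVecLin_mul]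
  simp_all

end Blocks

variable {K : Type*} [Field K]

theorem exists_fromRows_mul_fromCols_eq_one {n : Type*} [Fintype n] [DecidableEq n] {r m : ℕ}
    {P₁ : Matrix n (Fin r) K} {P₁' : Matrix (Fin r) n K} (h : P₁' * P₁ = 1)
    (hm : r + m = Fintype.card n) :
    ∃ (P₂ : Matrix n (Fin m) K) (P₂' : Matrix (Fin m) n K),
      fromRows P₁' P₂' * fromCols P₁ P₂ = 1 := by
  have hsurj : Function.Surjective P₁'.mulVecLin := fun y =>
    ⟨P₁ *ᵥ y, by rw [mulVecLin_apply, mulVec_mulVec, h, one_mulVec]⟩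
  have hker : finrank K (LinearMap.ker P₁'.mulVecLin) = m := by
    have := LinearMap.finrank_range_add_finrank_ker P₁'.mulVecLin
    rw [LinearMap.range_eq_top.2 hsurj, finrank_top, finrank_fin_fun, finrank_pi] at this
    omega
  let b := finBasisOfFinrankEq K _ hker
  let ι := (LinearMap.ker P₁'.mulVecLin).subtype ∘ₗ b.equivFun.symm.toLinearMap
  obtain ⟨L, hL⟩ := ι.exists_leftInverse_of_injective <| LinearMap.ker_eq_bot.2 <|
    Subtype.val_injective.comp b.equivFun.symm.injective
  have h₁₂ : P₁' * LinearMap.toMatrix' ι = 0 := by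
    have : toLin' P₁' ∘ₗ ι = 0 := LinearMap.ext fun y => (b.equivFun.symm y).2
    rw [← LinearMap.toMatrix'_toLin' P₁', ← LinearMap.toMatrix'_comp, this, map_zero]
  have h₂₂ : LinearMap.toMatrix' L * LinearMap.toMatrix' ι = 1 := by
    rw [← LinearMap.toMatrix'_comp, hL, LinearMap.toMatrix'_id]
  -- `L (1 - P₁ P₁')` kills the columns of `P₁` and still inverts `ι` on the left
  refine ⟨LinearMap.toMatrix' ι, LinearMap.toMatrix' L * (1 - P₁ * P₁'), ?_⟩
  rw [fromRows_mul_fromCols, h, h₁₂, ← fromBlocks_one]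
  congr 1 <;> simp [Matrix.sub_mul, Matrix.mul_assoc, h, h₁₂, h₂₂]

theorem exists_eq_mul_of_rank_eq {m n : Type*} [Fintype m] [Fintype n] [DecidableEq n] {r : ℕ}
    {A : Matrix m n K} (hr : A.rank = r) :
    ∃ (A₁ : Matrix m (Fin r) K) (A₂ : Matrix (Fin r) n K), A = A₁ * A₂ := by
  let b := finBasisOfFinrankEq K (LinearMap.range A.mulVecLin) hr
  refine ⟨LinearMap.toMatrix' (Submodule.subtype _ ∘ₗ b.equivFun.symm.toLinearMap),
    LinearMap.toMatrix' (b.equivFun.toLinearMap ∘ₗ A.mulVecLin.rangeRestrict), ?_⟩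
  rw [← LinearMap.toMatrix'_comp]
  conv_lhs => rw [← LinearMap.toMatrix'_toLin' A]
  congr 1
  refine LinearMap.ext fun x => ?_
  simp [toLin'_apply]

theorem isUnit_of_le_rank_mul {l m : Type*} [Fintype m] {r : ℕ} {X : Matrix l (Fin r) K}
    {Y : Matrix (Fin r) (Fin r) K} {Z : Matrix (Fin r) m K} (h : r ≤ (X * Y * Z).rank) :
    IsUnit Y := by
  have hY : Y.rank = r :=
    le_antisymm (by simpa using Y.rank_le_width)
      (h.trans ((rank_mul_le_left _ _).trans (rank_mul_le_right _ _)))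
  have hrange : LinearMap.range Y.mulVecLin = ⊤ :=
    Submodule.eq_top_of_finrank_eq (hY.trans (finrank_fin_fun K).symm)
  exact mulVec_surjective_iff_isUnit.1 (LinearMap.range_eq_top.1 hrange)

section IsAlgClosed

variable [IsAlgClosed K]

theorem exists_mul_mul_toBlocks₂₁_eq_zero {k : ℕ} (M : Matrix (Fin (k + 1)) (Fin (k + 1)) K) :
    ∃ (X : Matrix (Fin (k + 1)) (Fin 1 ⊕ Fin k) K) (Y : Matrix (Fin 1 ⊕ Fin k) (Fin (k + 1)) K),
      Y * X = 1 ∧ (Y * M * X).toBlocks₂₁ = 0 := by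
  obtain ⟨μ, hμ⟩ := Module.End.exists_eigenvalue (toLin' M)
  obtain ⟨v, hv⟩ := hμ.exists_hasEigenvector
  obtain ⟨i₀, hi₀⟩ : ∃ i, v i ≠ 0 := Function.ne_iff.1 hv.2
  let P₁ := replicateCol (Fin 1) v
  let P₁' := replicateRow (Fin 1) (Pi.single i₀ (v i₀)⁻¹)
  have hP : P₁' * P₁ = 1 := by
    ext i j
    rw [Subsingleton.elim i j]
    simp [P₁, P₁', inv_mul_cancel₀ hi₀]
  have hMP : M * P₁ = μ • P₁ := by
    rw [← replicateCol_mulVec, ← toLin'_apply, hv.apply_eq_smul, replicateCol_smul]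
  obtain ⟨P₂, P₂', hPP⟩ := exists_fromRows_mul_fromCols_eq_one hP
    (by simp [add_comm] : 1 + k = Fintype.card (Fin (k + 1)))
  refine ⟨fromCols P₁ P₂, fromRows P₁' P₂', hPP, ?_⟩
  rw [fromRows_mul_fromCols, ← fromBlocks_one, fromBlocks_inj] at hPP
  rw [fromRows_mul, fromRows_mul_fromCols, toBlocks_fromBlocks₂₁, Matrix.mul_assoc, hMP,
    Matrix.mul_smul, hPP.2.2.1, smul_zero]

theorem exists_isUpperTriangular_inv_mul_mul :
    ∀ {n : ℕ} (M : Matrix (Fin n) (Fin n) K),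
      ∃ U : Matrix (Fin n) (Fin n) K, IsUnit U ∧ (U⁻¹ * M * U).IsUpperTriangular
  | 0, _ => ⟨1, isUnit_one, fun i => i.elim0⟩
  | k + 1, M => by
    obtain ⟨X, Y, hYX, hM⟩ := exists_mul_mul_toBlocks₂₁_eq_zero M
    obtain ⟨W, hW, hT⟩ := exists_isUpperTriangular_inv_mul_mul (Y * M * X).toBlocks₂₂
    have hW' : IsUnit W.det := (isUnit_iff_isUnit_det W).1 hW
    let X' := X * fromBlocks (1 : Matrix (Fin 1) (Fin 1) K) 0 0 W
    let Y' := fromBlocks (1 : Matrix (Fin 1) (Fin 1) K) 0 0 W⁻¹ * Y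
    have hYX' : Y' * X' = 1 := by
      simp [X', Y', Matrix.mul_assoc, ← Matrix.mul_assoc Y, hYX, fromBlocks_multiply,
        nonsing_inv_mul _ hW']
    have hYMX' : Y' * M * X' = fromBlocks (Y * M * X).toBlocks₁₁
        ((Y * M * X).toBlocks₁₂ * W) 0 (W⁻¹ * (Y * M * X).toBlocks₂₂ * W) := by
      have : Y' * M * X' = fromBlocks 1 0 0 W⁻¹ * (Y * M * X) * fromBlocks 1 0 0 W := by
        simp only [X', Y', Matrix.mul_assoc]
      rw [this, ← fromBlocks_toBlocks (Y * M * X), hM, fromBlocks_multiply, fromBlocks_multiply]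
      simp
    let e := finSumFinEquiv.trans (finCongr (add_comm 1 k))
    have hU := submatrix_mul_submatrix_eq_one hYX' e.symm
    refine ⟨X'.submatrix id e.symm, IsUnit.of_mul_eq_one_right _ hU, ?_⟩
    rw [inv_eq_left_inv hU, ← submatrix_id_id M, ← submatrix_mul _ _ _ _ _ Function.bijective_id,
      ← submatrix_mul _ _ _ _ _ Function.bijective_id, hYMX']
    exact isUpperTriangular_reindex_fromBlocks _
      (fun i j hij => absurd hij (Subsingleton.elim i j ▸ lt_irrefl i)) hT _

theorem exists_mul_self_eq_of_isUnit [NeZero (2 : K)] {n : Type*} [Fintype n] [DecidableEq n]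
    {M : Matrix n n K} (hM : IsUnit M) : ∃ S : Matrix n n K, S * S = M := by
  have h0 : 0 ∉ M.charpoly.roots := fun h0 =>
    ((M.isUnit_iff_isUnit_det.1 hM).ne_zero)
      (by rw [M.det_eq_prod_roots_charpoly]; exact Multiset.prod_eq_zero h0)
  obtain ⟨p, q, hpq⟩ := exists_prod_X_sub_C_dvd_sq_sub_X h0
  rw [← (IsAlgClosed.splits M.charpoly).eq_prod_roots_of_monic M.charpoly_monic] at hpq
  refine ⟨aeval M p, ?_⟩
  have := congrArg (aeval M) hpq
  rwa [map_sub, map_pow, aeval_X, map_mul, Matrix.aeval_self_charpoly, zero_mul, sub_eq_zero,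
    sq] at this

theorem exists_isUpperTriangular_inv_mul_mul_eq_mul_self [NeZero (2 : K)] {r : ℕ}
    {M : Matrix (Fin r) (Fin r) K} (hM : IsUnit M) :
    ∃ U C : Matrix (Fin r) (Fin r) K, IsUnit U ∧ IsUnit C ∧ C.IsUpperTriangular ∧
      U⁻¹ * M * U = C * C := by
  obtain ⟨S, rfl⟩ := exists_mul_self_eq_of_isUnit hM
  obtain ⟨U, hU, hC⟩ := exists_isUpperTriangular_inv_mul_mul S
  have hCC : U⁻¹ * (S * S) * U = U⁻¹ * S * U * (U⁻¹ * S * U) := by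
    rw [isUnit_iff_isUnit_det] at hU
    simp only [Matrix.mul_assoc, mul_nonsing_inv_cancel_left _ _ hU]
  refine ⟨U, _, hU, isUnit_of_mul_isUnit_left (y := U⁻¹ * S * U) ?_, hC, hCC⟩
  rw [← hCC]
  exact ((isUnit_nonsing_inv_iff.2 hU).mul hM).mul hU

end IsAlgClosed

theorem exists_thin_jordanSVD {n : Type*} [Fintype n] {r : ℕ} {A₁ B₁ : Matrix n (Fin r) K}
    {A₂ B₂ : Matrix (Fin r) n K} {C : Matrix (Fin r) (Fin r) K} (hF : IsUnit (A₂ * B₁))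
    (hG : IsUnit (B₂ * A₁)) (hC : B₂ * A₁ * (A₂ * B₁) = C * C) :
    ∃ (P₁ Q₁ : Matrix n (Fin r) K) (P₁' Q₁' : Matrix (Fin r) n K),
      P₁' * P₁ = 1 ∧ Q₁' * Q₁ = 1 ∧ A₁ * A₂ = P₁ * C * Q₁' ∧ B₁ * B₂ = Q₁ * C * P₁' := by
  set F := A₂ * B₁
  set G := B₂ * A₁
  have hC' : IsUnit C.det :=
    (isUnit_iff_isUnit_det C).1 (isUnit_of_mul_isUnit_left (hC ▸ hG.mul hF))
  rw [isUnit_iff_isUnit_det] at hF hG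
  refine ⟨A₁ * G⁻¹ * C, B₁, C⁻¹ * B₂, F⁻¹ * A₂, ?_, ?_, ?_, ?_⟩
  · rw [Matrix.mul_assoc, ← Matrix.mul_assoc B₂, ← Matrix.mul_assoc B₂, mul_nonsing_inv _ hG,
      Matrix.one_mul, nonsing_inv_mul _ hC']
  · rw [Matrix.mul_assoc, nonsing_inv_mul _ hF]
  · calc A₁ * A₂ = A₁ * (G⁻¹ * (G * F * (F⁻¹ * A₂))) := by
          rw [Matrix.mul_assoc G, mul_nonsing_inv_cancel_left _ _ hF,
            nonsing_inv_mul_cancel_left _ _ hG]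
      _ = A₁ * G⁻¹ * C * C * (F⁻¹ * A₂) := by rw [hC]; simp only [Matrix.mul_assoc]
  · rw [Matrix.mul_assoc B₁, mul_nonsing_inv_cancel_left _ _ hC']

theorem exists_jordanSVD_of_thin {n r : ℕ} {P₁ Q₁ : Matrix (Fin n) (Fin r) K}
    {P₁' Q₁' : Matrix (Fin r) (Fin n) K} {C : Matrix (Fin r) (Fin r) K} (hP : P₁' * P₁ = 1)
    (hQ : Q₁' * Q₁ = 1) (hC : C.IsUpperTriangular) (hCu : IsUnit C) :
    ∃ P Q J : Matrix (Fin n) (Fin n) K, IsUnit P ∧ IsUnit Q ∧ J.IsUpperTriangular ∧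
      LinearMap.ker J.mulVecLin = LinearMap.ker (J * J).mulVecLin ∧
      P₁ * C * Q₁' = P * J * Q⁻¹ ∧ Q₁ * C * P₁' = Q * J * P⁻¹ := by
  have hr : r ≤ n := by
    simpa [hP] using (rank_mul_le_right P₁' P₁).trans P₁.rank_le_height
  obtain ⟨m, hm⟩ : ∃ m, r + m = n := ⟨n - r, Nat.add_sub_of_le hr⟩
  obtain ⟨P₂, P₂', hPP⟩ := exists_fromRows_mul_fromCols_eq_one hP (by simpa using hm)
  obtain ⟨Q₂, Q₂', hQQ⟩ := exists_fromRows_mul_fromCols_eq_one hQ (by simpa using hm)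
  let e := finSumFinEquiv.trans (finCongr hm)
  have hP' := submatrix_mul_submatrix_eq_one hPP e.symm
  have hQ' := submatrix_mul_submatrix_eq_one hQQ e.symm
  have hJ : ∀ (X : Matrix (Fin n) (Fin r) K) (X₂ : Matrix (Fin n) (Fin m) K)
      (Y : Matrix (Fin r) (Fin n) K) (Y₂ : Matrix (Fin m) (Fin n) K),
      X * C * Y = (fromCols X X₂).submatrix id e.symm * reindex e e (fromBlocks C 0 0 0) *
        (fromRows Y Y₂).submatrix e.symm id := by
    intro X X₂ Y Y₂
    simp [reindex_apply, fromCols_mul_fromBlocks, fromCols_mul_fromRows]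
  refine ⟨_, _, reindex e e (fromBlocks C 0 0 0), IsUnit.of_mul_eq_one_right _ hP',
    IsUnit.of_mul_eq_one_right _ hQ', isUpperTriangular_reindex_fromBlocks hm hC
    (blockTriangular_zero) 0,
    ker_mulVecLin_eq_ker_mul_self (X := reindex e e (fromBlocks C⁻¹ 0 0 0)) ?_,
    by rw [inv_eq_left_inv hQ']; exact hJ _ _ _ _, by rw [inv_eq_left_inv hP']; exact hJ _ _ _ _⟩
  rw [isUnit_iff_isUnit_det] at hCu
  simp [reindex_apply, fromBlocks_multiply, nonsing_inv_mul_cancel_left _ _ hCu]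

end Matrix

theorem exists_jordanSVD_of_rank {n : ℕ}
    (A B : Matrix (Fin n) (Fin n) ℂ)
    (hAB : (A * B).rank = A.rank) (hA : A.rank = B.rank)
    (hBA : B.rank = (B * A).rank) :
    ∃ (P Q J : Matrix (Fin n) (Fin n) ℂ), IsUnit P ∧ IsUnit Q ∧
      (∀ i j : Fin n, j < i → J i j = 0) ∧
      LinearMap.ker J.mulVecLin = LinearMap.ker (J * J).mulVecLin ∧
      A = P * J * Q⁻¹ ∧ B = Q * J * P⁻¹ := by
  obtain ⟨r, hr⟩ : ∃ r, A.rank = r := ⟨_, rfl⟩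
  obtain ⟨A₁, A₂, rfl⟩ := Matrix.exists_eq_mul_of_rank_eq hr
  obtain ⟨B₁, B₂, rfl⟩ := Matrix.exists_eq_mul_of_rank_eq (hA.symm.trans hr)
  have hF : IsUnit (A₂ * B₁) := Matrix.isUnit_of_le_rank_mul (X := A₁) (Z := B₂) <| by
    rw [show A₁ * (A₂ * B₁) * B₂ = A₁ * A₂ * (B₁ * B₂) by simp only [Matrix.mul_assoc], hAB, hr]
  have hG : IsUnit (B₂ * A₁) := Matrix.isUnit_of_le_rank_mul (X := B₁) (Z := A₂) <| by
    rw [show B₁ * (B₂ * A₁) * A₂ = B₁ * B₂ * (A₁ * A₂) by simp only [Matrix.mul_assoc], ← hBA,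
      ← hA, hr]
  obtain ⟨U, C, hU, hCu, hC, hUC⟩ :=
    Matrix.exists_isUpperTriangular_inv_mul_mul_eq_mul_self (hG.mul hF)
  have hU' : IsUnit U.det := (Matrix.isUnit_iff_isUnit_det U).1 hU
  -- refactoring `B` as `(B₁ U) (U⁻¹ B₂)` turns `G F` into `C * C`
  obtain ⟨P₁, Q₁, P₁', Q₁', hP, hQ, hA, hB⟩ :=
    Matrix.exists_thin_jordanSVD (B₁ := B₁ * U) (B₂ := U⁻¹ * B₂)
      (by simpa only [Matrix.mul_assoc] using hF.mul hU)
      (by simpa only [Matrix.mul_assoc] using (Matrix.isUnit_nonsing_inv_iff.2 hU).mul hG)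
      (by rw [← hUC]; simp only [Matrix.mul_assoc])
  rw [Matrix.mul_assoc B₁, Matrix.mul_nonsing_inv_cancel_left _ _ hU'] at hB
  obtain ⟨P, Q, J, hP, hQ, hJ, hker, hA', hB'⟩ := Matrix.exists_jordanSVD_of_thin hP hQ hC hCu
  exact ⟨P, Q, J, hP, hQ, fun i j hij => hJ hij, hker, hA.trans hA', hB.trans hB'⟩
end

section
/- Let A = [[0,0],[0,1]] and B = [[0,1],[0,0]] (2×2 complex matrices). Then there do not exist invertible matrices P, Q and a matrix J with A = PJQ⁻¹ and B = QJP⁻¹ such that J² is similar to both AB and BA; in particular, BA = [[0,1],[0,0]] has no square root, so [A,B] has no Jordan SVD. -/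
/-!
If `J * J = S * (B * A) * S⁻¹`, then `S⁻¹ * J * S` is a square root of `B * A = !![0, 1; 0, 0]`,
so it suffices to show that this matrix has no square root. A square root of a nonzero matrix
with zero square would be a nilpotent `2 × 2` matrix, and by Cayley–Hamilton every nilpotent
`2 × 2` matrix over a reduced ring already has zero square.
-/

namespace Matrix

variable {n R : Type*} [Fintype n] [DecidableEq n] [CommRing R]

open Polynomial in
theorem pow_card_eq_zero_of_isNilpotent [IsReduced R] {M : Matrix n n R} (hM : IsNilpotent M) :
    M ^ Fintype.card n = 0 := by
  have hchar : M.charpoly = X ^ Fintype.card n := sub_eq_zero.mp <| Polynomial.ext fun i ↦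
    (Polynomial.isNilpotent_iff.mp (isNilpotent_charpoly_sub_pow_of_isNilpotent hM) i).eq_zero
  simpa [hchar] using M.aeval_self_charpoly

theorem exists_mul_self_eq_of_mul_self_eq_conj {J S M : Matrix n n R} (hS : IsUnit S)
    (h : J * J = S * M * S⁻¹) : ∃ T, T * T = M := by
  have := hS.invertible
  refine ⟨S⁻¹ * J * S, ?_⟩
  calc S⁻¹ * J * S * (S⁻¹ * J * S) = S⁻¹ * (J * J) * S := by
        simp only [Matrix.mul_assoc, mul_inv_cancel_left_of_invertible]
    _ = M := by simp [h, Matrix.mul_assoc]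

theorem not_exists_mul_self_eq_of_mul_self_eq_zero [IsReduced R] {N : Matrix (Fin 2) (Fin 2) R}
    (hN : N * N = 0) (hN₀ : N ≠ 0) : ¬∃ S, S * S = N := by
  rintro ⟨S, rfl⟩
  have hS : IsNilpotent S := ⟨4, by rw [show 4 = 2 + 2 from rfl, pow_add, sq, hN]⟩
  exact hN₀ (by simpa [sq] using pow_card_eq_zero_of_isNilpotent hS)

end Matrix

open Matrix in
theorem no_jordanSVD_example :
    (¬ ∃ (P Q J : Matrix (Fin 2) (Fin 2) ℂ), IsUnit P ∧ IsUnit Q ∧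
        (!![0, 0; 0, 1] : Matrix (Fin 2) (Fin 2) ℂ) = P * J * Q⁻¹ ∧
        (!![0, 1; 0, 0] : Matrix (Fin 2) (Fin 2) ℂ) = Q * J * P⁻¹ ∧
        (∃ R : Matrix (Fin 2) (Fin 2) ℂ, IsUnit R ∧
          J * J = R * (!![0, 0; 0, 1] * !![0, 1; 0, 0]) * R⁻¹) ∧
        (∃ S : Matrix (Fin 2) (Fin 2) ℂ, IsUnit S ∧
          J * J = S * (!![0, 1; 0, 0] * !![0, 0; 0, 1]) * S⁻¹)) ∧
    ¬ ∃ S : Matrix (Fin 2) (Fin 2) ℂ, S * S = !![0, 1; 0, 0] := by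
  have hBA : (!![0, 1; 0, 0] * !![0, 0; 0, 1] : Matrix (Fin 2) (Fin 2) ℂ) = !![0, 1; 0, 0] := by
    rw [mul_fin_two]; simp
  have hNoSqrt : ¬ ∃ S : Matrix (Fin 2) (Fin 2) ℂ, S * S = !![0, 1; 0, 0] :=
    not_exists_mul_self_eq_of_mul_self_eq_zero
      (by rw [mul_fin_two, ← Matrix.ext_iff]; simp [Fin.forall_fin_two])
      (fun h ↦ by simpa using congrFun₂ h 0 1)
  refine ⟨?_, hNoSqrt⟩
  rintro ⟨-, -, J, -, -, -, -, -, S, hS, hJS⟩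
  exact hNoSqrt (hBA ▸ exists_mul_self_eq_of_mul_self_eq_conj hS hJS)
end

section
/- A double-complex square matrix M has a Jordan SVD (M = U[J,J]V* with U, V unitary and J a Jordan matrix) if and only if M has a polar decomposition M = WP with W unitary and P Hermitian. -/
/-- `J` is a matrix in Jordan normal form: its entries vanish off the diagonal and
superdiagonal, and each superdiagonal entry is `0` or `1`, the latter only when the two
adjacent diagonal entries agree (so `J` is a direct sum of Jordan blocks). -/
def IsJordanMatrix {n : ℕ} (J : Matrix (Fin n) (Fin n) ℂ) : Prop :=
  (∀ i j : Fin n, (j : ℕ) ≠ (i : ℕ) → (j : ℕ) ≠ (i : ℕ) + 1 → J i j = 0) ∧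
  (∀ i j : Fin n, (j : ℕ) = (i : ℕ) + 1 → J i j = 0 ∨ (J i j = 1 ∧ J i i = J j j))

/-!
In components a Jordan SVD reads `A = P J Q⁻¹`, `B = Q J P⁻¹` and a polar decomposition
`A = W H`, `B = H W⁻¹`. The first gives the second with `W = P Q⁻¹` and `H = Q J Q⁻¹`;
conversely, putting `H = S J S⁻¹` in Jordan normal form gives the first with `P = W S` and
`Q = S`. The Jordan normal form comes from the structure theorem for `ℂⁿ` as a torsion
`ℂ[X]`-module with `X` acting by `H`: on a cyclic summand `ℂ[X] ⧸ ((X - μ)^e)`, `X` acts in the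
basis `(X - μ)^(e-1), …, X - μ, 1` by the Jordan block of size `e` at `μ`, and listing the
blocks one after another keeps each chain on consecutive indices.
-/

open Polynomial Module
open scoped DirectSum

universe u

namespace Matrix

def jordanBlock {R : Type*} [Zero R] [One R] (μ : R) (e : ℕ) : Matrix (Fin e) (Fin e) R :=
  of fun i j => if i = j then μ else if (j : ℕ) = i + 1 then 1 else 0

theorem blockDiagonal'_jordanBlock_apply {R ι : Type*} [Zero R] [One R] [DecidableEq ι]
    {e : ι → ℕ} (μ : ι → R) (x y : Σ i, Fin (e i)) :
    blockDiagonal' (fun i => jordanBlock (μ i) (e i)) x y =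
      if x = y then μ x.1 else if x.1 = y.1 ∧ (y.2 : ℕ) = x.2 + 1 then 1 else 0 := by
  obtain ⟨i, k⟩ := x
  obtain ⟨j, l⟩ := y
  rw [blockDiagonal'_apply]
  by_cases h : i = j
  · subst h
    simp [jordanBlock]
  · simp [h]

end Matrix

open Matrix

theorem exists_sigma_equiv_fin_sum_succ {ι : Type*} [Fintype ι] (e : ι → ℕ) :
    ∃ σ : (Σ i, Fin (e i)) ≃ Fin (∑ i, e i),
      ∀ x y : Σ i, Fin (e i), x.1 = y.1 → (y.2 : ℕ) = x.2 + 1 → (σ y : ℕ) = σ x + 1 := by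
  set κ := Fintype.equivFin ι
  set τ : (Σ k, Fin (e (κ.symm k))) ≃ Σ i, Fin (e i) :=
    Equiv.sigmaCongrLeft (β := fun i => Fin (e i)) κ.symm
  refine ⟨τ.symm.trans (finSigmaFinEquiv.trans (finCongr (κ.symm.sum_comp e))), ?_⟩
  intro x y
  obtain ⟨⟨k, a⟩, rfl⟩ := τ.surjective x
  obtain ⟨⟨k', b⟩, rfl⟩ := τ.surjective y
  rintro (h : κ.symm k = κ.symm k') (hb : (b : ℕ) = a + 1)
  obtain rfl := κ.symm.injective h
  simp [hb, add_assoc]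

theorem isJordanMatrix_reindex_blockDiagonal'_jordanBlock {ι : Type*} [DecidableEq ι] {n : ℕ}
    {e : ι → ℕ} (μ : ι → ℂ) (σ : (Σ i, Fin (e i)) ≃ Fin n)
    (hσ : ∀ x y : Σ i, Fin (e i), x.1 = y.1 → (y.2 : ℕ) = x.2 + 1 → (σ y : ℕ) = σ x + 1) :
    IsJordanMatrix (reindex σ σ (blockDiagonal' fun i => jordanBlock (μ i) (e i))) := by
  refine ⟨fun a b hne hne₁ => ?_, fun a b hsucc => ?_⟩ <;>
    obtain ⟨x, rfl⟩ := σ.surjective a <;> obtain ⟨y, rfl⟩ := σ.surjective b <;>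
    simp only [reindex_apply, submatrix_apply, Equiv.symm_apply_apply,
      blockDiagonal'_jordanBlock_apply, if_true]
  · rw [if_neg (by rintro rfl; exact hne rfl), if_neg (fun h => hne₁ (hσ x y h.1 h.2))]
  · rw [if_neg (by rintro rfl; omega)]
    split_ifs with h
    · exact Or.inr ⟨rfl, congrArg μ h.1⟩
    · exact Or.inl rfl

theorem DFinsupp.basis_apply {R ι : Type*} [Semiring R] [DecidableEq ι] {M : ι → Type*}
    [∀ i, AddCommMonoid (M i)] [∀ i, Module R (M i)] {η : ι → Type*}
    (b : ∀ i, Basis (η i) R (M i)) (x : Σ i, η i) :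
    DFinsupp.basis b x = DFinsupp.single x.1 (b x.1 x.2) := by
  simp [DFinsupp.basis]

theorem LinearMap.toMatrix_dfinsuppBasis_mapRange {R ι : Type*} [CommSemiring R] [Fintype ι]
    [DecidableEq ι] {M : ι → Type*} [∀ i, AddCommMonoid (M i)] [∀ i, Module R (M i)]
    {η : ι → Type*} [∀ i, Fintype (η i)] [∀ i, DecidableEq (η i)]
    (b : ∀ i, Basis (η i) R (M i)) (f : ∀ i, Module.End R (M i)) :
    LinearMap.toMatrix (DFinsupp.basis b) (DFinsupp.basis b) (DFinsupp.mapRange.linearMap f) =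
      blockDiagonal' fun i => LinearMap.toMatrix (b i) (b i) (f i) := by
  ext ⟨i, k⟩ ⟨j, l⟩
  rw [LinearMap.toMatrix_apply, DFinsupp.basis_apply, DFinsupp.mapRange.linearMap_apply,
    DFinsupp.mapRange_single, blockDiagonal'_apply]
  change (b i).repr (DFinsupp.single j (f j (b j l)) i) k = _
  by_cases h : i = j
  · subst h
    simp [LinearMap.toMatrix_apply]
  · simp [DFinsupp.single_eq_of_ne h, h]

theorem LinearMap.toMatrix_basis_reindex {R M₁ M₂ ι₁ ι₂ κ₁ κ₂ : Type*} [CommSemiring R]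
    [AddCommMonoid M₁] [Module R M₁] [AddCommMonoid M₂] [Module R M₂]
    [Fintype ι₁] [Fintype κ₁] [DecidableEq ι₁] [DecidableEq κ₁] [Finite ι₂] [Finite κ₂]
    (b₁ : Basis ι₁ R M₁) (b₂ : Basis ι₂ R M₂) (σ₁ : ι₁ ≃ κ₁) (σ₂ : ι₂ ≃ κ₂) (f : M₁ →ₗ[R] M₂) :
    LinearMap.toMatrix (b₁.reindex σ₁) (b₂.reindex σ₂) f =
      reindex σ₂ σ₁ (LinearMap.toMatrix b₁ b₂ f) := by
  ext i j
  simp [LinearMap.toMatrix_apply]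

section JordanNormalForm

variable {K : Type u} [Field K]

theorem Polynomial.mkQ_X_sub_C_pow_eq_zero {μ : K} {e k : ℕ} (hk : e ≤ k) :
    (Submodule.span K[X] {(X - C μ) ^ e}).mkQ ((X - C μ) ^ k) = 0 :=
  (Submodule.Quotient.mk_eq_zero _).2 (Ideal.mem_span_singleton.2 (pow_dvd_pow _ hk))

theorem Polynomial.exists_basis_quotient_span_X_sub_C_pow (μ : K) (e : ℕ) :
    ∃ c : Basis (Fin e) K (K[X] ⧸ Submodule.span K[X] {(X - C μ) ^ e}),
      ∀ j, c j = (Submodule.span K[X] {(X - C μ) ^ e}).mkQ ((X - C μ) ^ (e - 1 - j)) := by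
  set I := Submodule.span K[X] {(X - C μ) ^ e}
  set v : Fin e → K[X] ⧸ I := fun j => I.mkQ ((X - C μ) ^ (e - 1 - j))
  have hspan : ⊤ ≤ Submodule.span K (Set.range v) := by
    rintro x -
    obtain ⟨q, rfl⟩ := I.mkQ_surjective x
    rw [← sum_taylor_eq q μ, Polynomial.sum, map_sum]
    refine Submodule.sum_mem _ fun k _ => ?_
    rw [← smul_eq_C_mul, LinearMap.map_smul_of_tower]
    refine Submodule.smul_mem _ _ ?_
    rcases lt_or_ge k e with hk | hk
    · exact Submodule.subset_span ⟨⟨e - 1 - k, by omega⟩, by simp only [v]; congr 3; omega⟩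
    · rw [mkQ_X_sub_C_pow_eq_zero hk]
      exact Submodule.zero_mem _
  have hcard : Fintype.card (Fin e) = finrank K (K[X] ⧸ I) := by
    rw [Fintype.card_fin, finrank_quotient_span_eq_natDegree]
    simp
  exact ⟨basisOfTopLeSpanOfCardEqFinrank v hspan hcard, fun j => by simp [v]⟩

theorem Polynomial.exists_basis_toMatrix_X_smul_quotient_X_sub_C_pow_eq_jordanBlock (μ : K)
    (e : ℕ) :
    ∃ c : Basis (Fin e) K (K[X] ⧸ Submodule.span K[X] {(X - C μ) ^ e}),
      LinearMap.toMatrix c c (DistribSMul.toLinearMap K _ (X : K[X])) = jordanBlock μ e := by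
  set I := Submodule.span K[X] {(X - C μ) ^ e}
  obtain ⟨c, hc⟩ := exists_basis_quotient_span_X_sub_C_pow μ e
  have hX (j : Fin e) : (X : K[X]) • c j = μ • c j + I.mkQ ((X - C μ) ^ (e - j)) := by
    have hexp : e - j = e - 1 - j + 1 := by omega
    rw [hc, hexp, ← I.mkQ.map_smul_of_tower μ, ← map_smul, ← map_add, smul_eq_C_mul,
      smul_eq_mul, pow_succ]
    congr 1
    ring
  refine ⟨c, ?_⟩
  ext i j
  rw [LinearMap.toMatrix_apply, DistribSMul.toLinearMap_apply, hX, map_add, map_smul, c.repr_self]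
  rcases Nat.eq_zero_or_pos (j : ℕ) with hj | hj
  · rw [mkQ_X_sub_C_pow_eq_zero (by omega), map_zero]
    simp [jordanBlock, Finsupp.single_apply, hj, eq_comm]
  · have hprev : I.mkQ ((X - C μ) ^ (e - j)) = c ⟨j - 1, by omega⟩ := by
      rw [hc]
      congr 2
      dsimp only
      omega
    rw [hprev, c.repr_self]
    simp only [jordanBlock, of_apply, Finsupp.add_apply, Finsupp.smul_apply, Finsupp.single_apply,
      smul_eq_mul, Fin.ext_iff]
    split_ifs <;> first | omega | simp

theorem Irreducible.exists_basis_toMatrix_X_smul_quotient_pow_eq_jordanBlock [IsAlgClosed K]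
    {p : K[X]} (hp : Irreducible p) (e : ℕ) :
    ∃ (μ : K) (c : Basis (Fin e) K (K[X] ⧸ Submodule.span K[X] {p ^ e})),
      LinearMap.toMatrix c c (DistribSMul.toLinearMap K _ (X : K[X])) = jordanBlock μ e := by
  obtain ⟨μ, hμ⟩ := IsAlgClosed.exists_root p (degree_pos_of_irreducible hp).ne'
  have hassoc : Associated ((X - C μ) ^ e) (p ^ e) :=
    ((irreducible_X_sub_C μ).associated_of_dvd hp (dvd_iff_isRoot.mpr hμ)).pow_pow
  have hspan : Submodule.span K[X] {(X - C μ) ^ e} = Submodule.span K[X] {p ^ e} :=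
    Ideal.span_singleton_eq_span_singleton.mpr hassoc
  rw [← hspan]
  exact ⟨μ, exists_basis_toMatrix_X_smul_quotient_X_sub_C_pow_eq_jordanBlock μ e⟩

variable {V : Type*} [AddCommGroup V] [Module K V] [FiniteDimensional K V]

theorem Module.End.exists_basis_toMatrix_eq_blockDiagonal'_jordanBlock [IsAlgClosed K]
    (f : Module.End K V) :
    ∃ (ι : Type u) (_ : Fintype ι) (_ : DecidableEq ι) (μ : ι → K) (e : ι → ℕ)
      (b : Basis (Σ i, Fin (e i)) K V),
      LinearMap.toMatrix b b f = blockDiagonal' fun i => jordanBlock (μ i) (e i) := by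
  classical
  obtain ⟨ι, _, p, hp, e, ⟨g⟩⟩ := Module.equiv_directSum_of_isTorsion
    (Module.AEval.isTorsion_of_finiteDimensional K V f)
  choose μ c hc using fun i =>
    (hp i).exists_basis_toMatrix_X_smul_quotient_pow_eq_jordanBlock (e i)
  set φ : V ≃ₗ[K] ⨁ i, K[X] ⧸ Submodule.span K[X] {p i ^ e i} :=
    (Module.AEval'.of f).trans (g.restrictScalars K)
  have hφ : φ.toLinearMap ∘ₗ f ∘ₗ φ.symm.toLinearMap =
      DFinsupp.mapRange.linearMap fun i => DistribSMul.toLinearMap K _ (X : K[X]) := by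
    refine LinearMap.ext fun y => DFinsupp.ext fun i => ?_
    obtain ⟨v, rfl⟩ := φ.surjective y
    have hfv : φ (f v) = (X : K[X]) • φ v := by
      simp only [φ, LinearEquiv.trans_apply, LinearEquiv.restrictScalars_apply,
        ← AEval'.X_smul_of, map_smul]
    simp only [LinearMap.comp_apply, LinearEquiv.coe_coe, φ.symm_apply_apply, hfv]
    rfl
  refine ⟨ι, inferInstance, inferInstance, μ, e, (DFinsupp.basis c).map φ.symm, ?_⟩
  rw [LinearMap.toMatrix_map_left, LinearMap.toMatrix_map_right, LinearEquiv.symm_symm,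
    hφ, LinearMap.toMatrix_dfinsuppBasis_mapRange]
  simp only [hc]

end JordanNormalForm

theorem Module.End.exists_basis_isJordanMatrix_toMatrix {V : Type*} [AddCommGroup V]
    [Module ℂ V] [FiniteDimensional ℂ V] {n : ℕ} (hn : finrank ℂ V = n) (f : Module.End ℂ V) :
    ∃ b : Basis (Fin n) ℂ V, IsJordanMatrix (LinearMap.toMatrix b b f) := by
  obtain ⟨ι, _, _, μ, e, b, hb⟩ := f.exists_basis_toMatrix_eq_blockDiagonal'_jordanBlock
  obtain ⟨σ, hσ⟩ := exists_sigma_equiv_fin_sum_succ e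
  have hcard : ∑ i, e i = n := by
    rw [← hn, finrank_eq_card_basis b]
    simp
  refine ⟨b.reindex (σ.trans (finCongr hcard)), ?_⟩
  rw [LinearMap.toMatrix_basis_reindex, hb]
  exact isJordanMatrix_reindex_blockDiagonal'_jordanBlock μ _ fun x y h₁ h₂ => by
    simpa using hσ x y h₁ h₂

theorem Matrix.exists_isJordanMatrix_eq_mul_mul_inv {n : ℕ} (H : Matrix (Fin n) (Fin n) ℂ) :
    ∃ S J : Matrix (Fin n) (Fin n) ℂ, IsUnit S ∧ IsJordanMatrix J ∧ H = S * J * S⁻¹ := by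
  obtain ⟨b, hb⟩ := Module.End.exists_basis_isJordanMatrix_toMatrix (finrank_fin_fun ℂ) (toLin' H)
  set e := Pi.basisFun ℂ (Fin n)
  have := e.invertibleToMatrix b
  refine ⟨e.toMatrix b, _, isUnit_of_invertible _, hb, ?_⟩
  rw [inv_eq_right_inv (e.toMatrix_mul_toMatrix_flip b),
    basis_toMatrix_mul_linearMap_toMatrix_mul_basis_toMatrix, LinearMap.toMatrix_eq_toMatrix',
    LinearMap.toMatrix'_toLin']

theorem jordanSVD_iff_polarDecomposition {n : ℕ}
    (A B : Matrix (Fin n) (Fin n) ℂ) :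
    (∃ (P Q J : Matrix (Fin n) (Fin n) ℂ), IsUnit P ∧ IsUnit Q ∧
        IsJordanMatrix J ∧ A = P * J * Q⁻¹ ∧ B = Q * J * P⁻¹) ↔
    (∃ (W H : Matrix (Fin n) (Fin n) ℂ), IsUnit W ∧
        A = W * H ∧ B = H * W⁻¹) := by
  constructor
  · rintro ⟨_, _, J, ⟨P, rfl⟩, ⟨Q, rfl⟩, -, rfl, rfl⟩
    refine ⟨(P * Q⁻¹).val, Q.val * J * Q⁻¹.val, Units.isUnit _, ?_, ?_⟩ <;>
      simp only [← Matrix.coe_units_inv] <;> simp [mul_assoc]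
  · rintro ⟨W, H, hW, rfl, rfl⟩
    obtain ⟨S, J, hS, hJ, rfl⟩ := H.exists_isJordanMatrix_eq_mul_mul_inv
    refine ⟨W * S, S, J, hW.mul hS, hS, hJ, by simp only [mul_assoc], ?_⟩
    rw [Matrix.mul_inv_rev]
    simp only [mul_assoc]
end

section
/- Let u₁, …, uₙ be vectors in the free module (ℂ⊕ℂ)^d over the double-complex ring (d > n) that are orthonormal with respect to the sesquilinear form ⟨v,w⟩ = Σᵢ vᵢ* wᵢ, where * swaps components. Then there exists a vector w orthogonal to all uᵢ with ⟨w,w⟩ = 1; hence any orthonormal set of size n < d extends to an orthonormal set of size n+1. -/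
/-- The sesquilinear form `⟨v,w⟩ = ∑ i, (v i)* * w i` on `(ℂ ⊕ ℂ)^d`, where the
involution on the double-complex numbers `ℂ × ℂ` swaps the two components. -/
noncomputable def dcInner {d : ℕ} (v w : Fin d → ℂ × ℂ) : ℂ × ℂ :=
  ∑ i, Prod.swap (v i) * w i

/-!
Write `u i = (a i, b i)` and let `A`, `B` be the `n × d` matrices with rows `a i`, `b i`.
Orthonormality says exactly `B * Aᵀ = 1`, so `P = 1 - Aᵀ * B` is an idempotent with `B * P = 0`,
`A * Pᵀ = 0` and trace `d - n ≠ 0`. Pick `k` with `P k k ≠ 0`; then `x = P e_k / P k k` and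
`y = Pᵀ e_k` satisfy `B x = 0`, `A y = 0` and `y ⬝ᵥ x = (P * P) k k / P k k = 1`, and
`w = (x, y)` is the required vector.
-/

open Matrix

namespace Matrix

variable {m n R : Type*} [Fintype m] [Fintype n] [DecidableEq m] [DecidableEq n] [CommRing R]
  {A B : Matrix m n R}

theorem mul_one_sub_transpose_mul (h : B * Aᵀ = 1) : B * (1 - Aᵀ * B) = 0 := by
  rw [Matrix.mul_sub, Matrix.mul_one, ← Matrix.mul_assoc, h, Matrix.one_mul, sub_self]

theorem mul_transpose_one_sub_transpose_mul (h : B * Aᵀ = 1) : A * (1 - Aᵀ * B)ᵀ = 0 := by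
  have h' : A * Bᵀ = 1 := by simpa using congrArg transpose h
  rw [transpose_sub, transpose_one, transpose_mul, transpose_transpose, Matrix.mul_sub,
    Matrix.mul_one, ← Matrix.mul_assoc, h', Matrix.one_mul, sub_self]

theorem isIdempotentElem_one_sub_transpose_mul (h : B * Aᵀ = 1) :
    IsIdempotentElem (1 - Aᵀ * B) := by
  refine IsIdempotentElem.one_sub ?_
  rw [IsIdempotentElem, Matrix.mul_assoc, ← Matrix.mul_assoc B, h, Matrix.one_mul]

theorem trace_one_sub_transpose_mul (h : B * Aᵀ = 1) :
    trace (1 - Aᵀ * B) = (Fintype.card n - Fintype.card m : R) := by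
  rw [trace_sub, trace_one, trace_mul_comm, h, trace_one]

omit [Fintype m] [DecidableEq m] [DecidableEq n] in
theorem exists_diag_ne_zero_of_trace_ne_zero {M : Matrix n n R} (h : trace M ≠ 0) :
    ∃ k, M k k ≠ 0 := by
  obtain ⟨k, -, hk⟩ := Finset.exists_ne_zero_of_sum_ne_zero h
  exact ⟨k, hk⟩

omit [Fintype m] [DecidableEq m] in
theorem dotProduct_mulVec_single_of_isIdempotentElem {P : Matrix n n R} (hP : IsIdempotentElem P)
    (k : n) : (Pᵀ *ᵥ Pi.single k 1) ⬝ᵥ (P *ᵥ Pi.single k 1) = P k k := by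
  rw [mulVec_transpose, ← dotProduct_mulVec, mulVec_mulVec, hP.eq, single_one_dotProduct,
    mulVec_single_one]
  rfl

theorem exists_dotProduct_eq_one_of_mul_transpose_eq_one {K : Type*} [Field K] [CharZero K]
    {A B : Matrix m n K} (hmn : Fintype.card m < Fintype.card n) (h : B * Aᵀ = 1) :
    ∃ x y : n → K, B *ᵥ x = 0 ∧ A *ᵥ y = 0 ∧ y ⬝ᵥ x = 1 := by
  set P := 1 - Aᵀ * B
  have htrace : trace P ≠ 0 := by
    rw [trace_one_sub_transpose_mul h, sub_ne_zero]
    exact_mod_cast hmn.ne'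
  obtain ⟨k, hk⟩ := exists_diag_ne_zero_of_trace_ne_zero htrace
  refine ⟨(P k k)⁻¹ • P *ᵥ Pi.single k 1, Pᵀ *ᵥ Pi.single k 1, ?_, ?_, ?_⟩
  · rw [mulVec_smul, mulVec_mulVec, mul_one_sub_transpose_mul h, zero_mulVec, smul_zero]
  · rw [mulVec_mulVec, mul_transpose_one_sub_transpose_mul h, zero_mulVec]
  · rw [dotProduct_smul, dotProduct_mulVec_single_of_isIdempotentElem
      (isIdempotentElem_one_sub_transpose_mul h), smul_eq_mul, inv_mul_cancel₀ hk]

end Matrix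

theorem dcInner_eq {d : ℕ} (v w : Fin d → ℂ × ℂ) :
    dcInner v w = ((Prod.snd ∘ v) ⬝ᵥ (Prod.fst ∘ w), (Prod.fst ∘ v) ⬝ᵥ (Prod.snd ∘ w)) := by
  simp [dcInner, dotProduct, Prod.ext_iff, Prod.fst_sum, Prod.snd_sum]

theorem extend_orthonormal_set {d n : ℕ} (hdn : n < d)
    (u : Fin n → Fin d → ℂ × ℂ)
    (horth : ∀ i j, dcInner (u i) (u j) = if i = j then 1 else 0) :
    ∃ w : Fin d → ℂ × ℂ, (∀ i, dcInner (u i) w = 0) ∧ dcInner w w = 1 := by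
  have hBA : (of fun i j => (u i j).2) * (of fun i j => (u i j).1)ᵀ = 1 := by
    ext i j
    simpa [dcInner_eq, mul_apply, dotProduct, one_apply, apply_ite Prod.fst]
      using congrArg Prod.fst (horth i j)
  have hcard : Fintype.card (Fin n) < Fintype.card (Fin d) := by simpa using hdn
  obtain ⟨x, y, hx, hy, hyx⟩ := exists_dotProduct_eq_one_of_mul_transpose_eq_one hcard hBA
  refine ⟨fun j => (x j, y j), fun i => ?_, ?_⟩
  · rw [dcInner_eq]
    exact Prod.ext (congrFun hx i) (congrFun hy i)
  · rw [dcInner_eq]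
    exact Prod.ext hyx ((dotProduct_comm x y).trans hyx)
end
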